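/- Let the time domain be ℤ, let γ ∈ ℝ and suppose the γ-shifted system has a dichotomy on a splitting (L1,L2). Then L2 = { x₀ ∈ ℝ^d : lim_{n→−∞} e^{−γn}·x(n,x₀) = 0 }. -/
import Mathlib


open Set Filter Topology

noncomputable section

abbrev Euc (d : ℕ) := EuclideanSpace ℝ (Fin d)

def solFwd {d : ℕ} (A : ℤ → (Euc d ≃L[ℝ] Euc d)) : ℕ → Euc d → Euc d
  | 0, x => x
  | n + 1, x => A (n : ℤ) (solFwd A n x)

def solBwd {d : ℕ} (A : ℤ → (Euc d ≃L[ℝ] Euc d)) : ℕ → Euc d → Euc d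
  | 0, x => (A (-1)).symm x
  | n + 1, x => (A (Int.negSucc (n + 1))).symm (solBwd A n x)

/-- The solution `x(n,x₀)` for two-sided time `ℤ`. -/
def solZ {d : ℕ} (A : ℤ → (Euc d ≃L[ℝ] Euc d)) : ℤ → Euc d → Euc d
  | Int.ofNat n, x => solFwd A n x
  | Int.negSucc n, x => solBwd A n x

/-- Boundedness of the coefficients `A(n)` and their inverses. -/
def BddSysZ {d : ℕ} (A : ℤ → (Euc d ≃L[ℝ] Euc d)) : Prop :=
  (∃ c : ℝ, ∀ n : ℤ, ‖(A n : Euc d →L[ℝ] Euc d)‖ ≤ c) ∧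
  (∃ c : ℝ, ∀ n : ℤ, ‖((A n).symm : Euc d →L[ℝ] Euc d)‖ ≤ c)

/-- `D1(γ,U)` holds uniformly (two-sided time). -/
def D1uZ {d : ℕ} (A : ℤ → (Euc d ≃L[ℝ] Euc d)) (γ : ℝ) (U : Submodule ℝ (Euc d)) : Prop :=
  ∃ C : ℝ, 0 < C ∧
    ∀ m n : ℤ, m ≤ n → ∀ x₀ ∈ U,
      ‖solZ A n x₀‖ ≤ C * Real.exp (γ * ((n : ℝ) - (m : ℝ))) * ‖solZ A m x₀‖

/-- `D2(γ,U)` holds uniformly (two-sided time). -/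
def D2uZ {d : ℕ} (A : ℤ → (Euc d ≃L[ℝ] Euc d)) (γ : ℝ) (U : Submodule ℝ (Euc d)) : Prop :=
  ∃ C : ℝ, 0 < C ∧
    ∀ m n : ℤ, m ≤ n → ∀ x₀ ∈ U,
      C * Real.exp (γ * ((n : ℝ) - (m : ℝ))) * ‖solZ A m x₀‖ ≤ ‖solZ A n x₀‖

/-- `𝒰` is a set of subspaces of `L` whose union is `L`. -/
def IsCover {d : ℕ} (𝒰 : Set (Submodule ℝ (Euc d))) (L : Submodule ℝ (Euc d)) : Prop :=
  (∀ U ∈ 𝒰, U ≤ L) ∧ (⋃ U ∈ 𝒰, (U : Set (Euc d))) = (L : Set (Euc d))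

/-- The `γ`-shifted system has a dichotomy on the splitting `(L1,L2)` (two-sided time). -/
def ShiftedDichotomyZ {d : ℕ} (A : ℤ → (Euc d ≃L[ℝ] Euc d)) (γ : ℝ)
    (L1 L2 : Submodule ℝ (Euc d)) : Prop :=
  IsCompl L1 L2 ∧
  ∃ 𝒰1 𝒰2 : Set (Submodule ℝ (Euc d)), IsCover 𝒰1 L1 ∧ IsCover 𝒰2 L2 ∧
    ∃ α : ℝ, 0 < α ∧ (∀ U ∈ 𝒰1, D1uZ A (γ - α) U) ∧ (∀ U ∈ 𝒰2, D2uZ A (γ + α) U)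

lemma solFwd_add {d : ℕ} (A : ℤ → (Euc d ≃L[ℝ] Euc d)) (n : ℕ) (x y : Euc d) :
    solFwd A n (x + y) = solFwd A n x + solFwd A n y := by
  induction n with
  | zero => rfl
  | succ n ih => simp [solFwd, ih, map_add]

lemma solBwd_add {d : ℕ} (A : ℤ → (Euc d ≃L[ℝ] Euc d)) (n : ℕ) (x y : Euc d) :
    solBwd A n (x + y) = solBwd A n x + solBwd A n y := by
  induction n with
  | zero => simp [solBwd, map_add]
  | succ n ih => simp [solBwd, ih, map_add]

lemma solZ_add {d : ℕ} (A : ℤ → (Euc d ≃L[ℝ] Euc d)) (n : ℤ) (x y : Euc d) :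
    solZ A n (x + y) = solZ A n x + solZ A n y := by
  cases n with
  | ofNat n => exact solFwd_add A n x y
  | negSucc n => exact solBwd_add A n x y

lemma exp_int_tendsto (α : ℝ) (hα : 0 < α) :
    Tendsto (fun m : ℤ => Real.exp (α * (m : ℝ))) atBot (𝓝 0) := by
  apply Real.tendsto_exp_atBot.comp
  exact (tendsto_intCast_atBot_iff.2 tendsto_id).const_mul_atBot hα


/-- **Dynamical characterization of the unstable subspace `L2`, two-sided time.** -/
theorem unstable_subspace_characterization_Z {d : ℕ} (hd : 1 ≤ d)
    (A : ℤ → (Euc d ≃L[ℝ] Euc d)) (hA : BddSysZ A)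
    (γ : ℝ) (L1 L2 : Submodule ℝ (Euc d))
    (h : ShiftedDichotomyZ A γ L1 L2) :
    (L2 : Set (Euc d)) =
      {x₀ | Tendsto (fun n : ℤ => Real.exp (-(γ * (n : ℝ))) • solZ A n x₀) atBot (𝓝 0)} := by
  obtain ⟨hcompl, 𝒰1, 𝒰2, hc1, hc2, α, hα, hD1, hD2⟩ := h
  have fwd : ∀ x₀ ∈ L2,
      Tendsto (fun m : ℤ => Real.exp (-(γ * (m : ℝ))) • solZ A m x₀) atBot (𝓝 0) := by
    intro x₀ hx₀
    have hx₀' : x₀ ∈ ⋃ U ∈ 𝒰2, (U : Set (Euc d)) := hc2.2 ▸ hx₀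
    obtain ⟨U, hU, hxU⟩ := mem_iUnion₂.1 hx₀'
    obtain ⟨C, hC, hbound⟩ := hD2 U hU
    apply squeeze_zero_norm'
      (a := fun m : ℤ => C⁻¹ * ‖x₀‖ * Real.exp (α * (m : ℝ)))
    · filter_upwards [eventually_le_atBot (0 : ℤ)] with m hm
      have hb := hbound m 0 hm x₀ hxU
      have h0 : solZ A 0 x₀ = x₀ := rfl
      rw [h0] at hb
      have hsplit : Real.exp (-(γ * (m : ℝ))) =
          Real.exp ((γ + α) * (((0 : ℤ) : ℝ) - (m : ℝ))) * Real.exp (α * (m : ℝ)) := by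
        rw [← Real.exp_add]; congr 1; push_cast; ring
      rw [norm_smul, Real.norm_eq_abs, abs_of_pos (Real.exp_pos _), hsplit]
      have hE2 := Real.exp_pos (α * (m : ℝ))
      have hE1 := Real.exp_pos ((γ + α) * (((0 : ℤ) : ℝ) - (m : ℝ)))
      have hs : (0:ℝ) ≤ ‖solZ A m x₀‖ := norm_nonneg _
      have key := mul_le_mul_of_nonneg_left hb
        (by positivity : (0:ℝ) ≤ C⁻¹ * Real.exp (α * (m : ℝ)))
      have hrw : C⁻¹ * Real.exp (α * (m : ℝ)) *
            (C * Real.exp ((γ + α) * (((0 : ℤ) : ℝ) - (m : ℝ))) * ‖solZ A m x₀‖)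
          = Real.exp ((γ + α) * (((0 : ℤ) : ℝ) - (m : ℝ))) * Real.exp (α * (m : ℝ)) *
            ‖solZ A m x₀‖ := by
        field_simp
      rw [hrw] at key
      exact key.trans_eq (by ring)
    · have := (exp_int_tendsto α hα).const_mul (C⁻¹ * ‖x₀‖)
      simpa using this
  ext x₀
  simp only [Set.mem_setOf_eq, SetLike.mem_coe]
  constructor
  · exact fwd x₀
  · intro hx
    have hmem : x₀ ∈ L1 ⊔ L2 := by rw [hcompl.sup_eq_top]; trivial
    obtain ⟨y, hy, z, hz, hyz⟩ := Submodule.mem_sup.1 hmem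
    have hz' := fwd z hz
    have hy0 : Tendsto (fun m : ℤ => Real.exp (-(γ * (m : ℝ))) • solZ A m y) atBot (𝓝 0) := by
      have heq : (fun m : ℤ => Real.exp (-(γ * (m : ℝ))) • solZ A m y) =
          fun m : ℤ => Real.exp (-(γ * (m : ℝ))) • solZ A m x₀ -
            Real.exp (-(γ * (m : ℝ))) • solZ A m z := by
        funext m
        rw [← smul_sub]
        congr 1
        rw [← hyz, solZ_add]
        abel
      rw [heq]
      simpa using hx.sub hz'
    -- show y = 0
    have hy1 : y ∈ ⋃ U ∈ 𝒰1, (U : Set (Euc d)) := hc1.2 ▸ hy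
    obtain ⟨U, hU, hyU⟩ := mem_iUnion₂.1 hy1
    obtain ⟨C, hC, hbound⟩ := hD1 U hU
    have hylim : ‖y‖ ≤ 0 := by
      have hg : Tendsto (fun m : ℤ =>
          C * Real.exp (α * (m : ℝ)) * ‖Real.exp (-(γ * (m : ℝ))) • solZ A m y‖)
          atBot (𝓝 0) := by
        have h1 := (exp_int_tendsto α hα).const_mul C
        have h2 := hy0.norm
        have := h1.mul h2
        simpa using this
      apply ge_of_tendsto hg
      filter_upwards [eventually_le_atBot (0 : ℤ)] with m hm
      have hb := hbound m 0 hm y hyU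
      have h0 : solZ A 0 y = y := rfl
      rw [h0] at hb
      have hsplit : Real.exp ((γ - α) * (((0 : ℤ) : ℝ) - (m : ℝ))) =
          Real.exp (-(γ * (m : ℝ))) * Real.exp (α * (m : ℝ)) := by
        rw [← Real.exp_add]; congr 1; push_cast; ring
      rw [norm_smul, Real.norm_eq_abs, abs_of_pos (Real.exp_pos _)]
      calc ‖y‖ ≤ C * Real.exp ((γ - α) * (((0 : ℤ) : ℝ) - (m : ℝ))) * ‖solZ A m y‖ := hb
        _ = C * Real.exp (α * (m : ℝ)) * (Real.exp (-(γ * (m : ℝ))) * ‖solZ A m y‖) := by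
            rw [hsplit]; ring
    have hy_eq : y = 0 := by
      have := norm_nonneg y
      have : ‖y‖ = 0 := le_antisymm hylim (norm_nonneg y)
      exact norm_eq_zero.1 this
    rw [← hyz, hy_eq, zero_add]
    exact hz

end
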